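/- Consider an irreducible Markov chain and an associated transfinite rotor walk started at vertex a (restarted at a each time it goes to infinity). Let I_n be the number of times the walk goes to infinity before the n-th return to a. Then limsup_{n -> infinity} I_n / n <= P_a(T_a^+ = infinity). -/

import Mathlib

open scoped BigOperators Classical

/-- `(x, r)` is a rotor walk for the rotor mechanism `(d, succ)`.  Rotor values are
`0`-based: rotor value `j` at `u` means the rotor points to `succ u j`
(corresponding to `u^(j+1)` in `1`-based notation).  At each step the rotor at the
current particle position is incremented cyclically and the particle moves in the
new rotor direction. -/
def IsRotorWalk {V : Type*} (d : V → ℕ) (succ : V → ℕ → V)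
    (x : ℕ → V) (r : ℕ → V → ℕ) : Prop :=
  (∀ v, r 0 v < d v) ∧
  (∀ t, r (t + 1) (x t) = (r t (x t) + 1) % d (x t)) ∧
  (∀ t v, v ≠ x t → r (t + 1) v = r t v) ∧
  (∀ t, x (t + 1) = succ (x t) (r (t + 1) (x t)))

/-- the number of visits of the walk `x` to `v` strictly before time `t` -/
noncomputable def nvisits {V : Type*} (x : ℕ → V) (t : ℕ) (v : V) : ℕ :=
  ((Finset.range t).filter fun s => x s = v).card

/-- the rotor mechanism `(d, succ)` realizes the transition kernel `p`:
`p u v` is the proportion of the `d u` successors of `u` equal to `v` -/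
def Realizes {V : Type*} (d : V → ℕ) (succ : V → ℕ → V) (p : V → V → ℝ) : Prop :=
  (∀ u, 0 < d u) ∧
  ∀ u v, p u v = ((Finset.range (d u)).filter fun i => succ u i = v).card / d u

/-- `hitAux p b c t v` is the probability, for the Markov chain with kernel `p`
started at `v`, of hitting `b` before hitting `c` and within `t` steps. -/
noncomputable def hitAux {V : Type*} (p : V → V → ℝ) (b c : V) : ℕ → V → ℝ
  | 0, v => if v = b then 1 else 0
  | t + 1, v => if v = b then 1 else if v = c then 0 else ∑' w, p v w * hitAux p b c t w

/-- the hitting probability `h_{b,c}(v) = P_v(T_b < T_c)`, as the monotone limit of the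
probabilities of hitting `b` before `c` within `t` steps.  (Taking `b = c` gives the
single-target hitting probability `P_v(T_b < ∞)`.) -/
noncomputable def hitProb {V : Type*} (p : V → V → ℝ) (b c : V) (v : V) : ℝ :=
  ⨆ t, hitAux p b c t v

/-- the escape probability `e_{u,v} = P_u(T_v < T_u^+)`: a first step from `u` to `w`,
then hit `v` before `u`. -/
noncomputable def escProb {V : Type*} (p : V → V → ℝ) (u v : V) : ℝ :=
  ∑' w, p u w * hitProb p v u w

/-- irreducibility of the kernel: any vertex can be reached from any other by a path of
positive-probability steps -/
def IrreducibleKernel {V : Type*} (p : V → V → ℝ) : Prop :=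
  ∀ u v : V, ∃ (n : ℕ) (f : ℕ → V), f 0 = u ∧ f n = v ∧ ∀ i < n, 0 < p (f i) (f (i + 1))

/-- A transfinite rotor walk started at `a`: a (finite or infinite) sequence of rotor
walks `X m`, each started at `a`; every walk strictly before stage `M` is transient and
the next walk starts from its limiting rotor configuration; if `M` is finite, the walk at
stage `M` is recurrent (so the transfinite walk stops evolving there). -/
structure TransRW {V : Type*} (d : V → ℕ) (succ : V → ℕ → V) (a : V) where
  M : ℕ∞
  X : ℕ → ℕ → V
  R : ℕ → ℕ → V → ℕ
  walk : ∀ m : ℕ, (m : ℕ∞) ≤ M → IsRotorWalk d succ (X m) (R m) ∧ X m 0 = a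
  transient : ∀ m : ℕ, (m : ℕ∞) < M → ∀ v, {t | X m t = v}.Finite
  limit : ∀ m : ℕ, (m : ℕ∞) < M → ∀ v, ∃ T, ∀ t, T ≤ t → R m t v = R (m + 1) 0 v
  last_recurrent : ∀ m : ℕ, (m : ℕ∞) = M → ∀ v, {t | X m t = v}.Infinite

/-- `ntau W m t v` is the number of visits to `v` before the transfinite time
`τ = m·ω + t`: all visits during the first `m` (completed) walks, plus the visits of the
`m`-th walk before time `t`. -/
noncomputable def ntau {V : Type*} {d : V → ℕ} {succ : V → ℕ → V} {a : V}
    (W : TransRW d succ a) (m t : ℕ) (v : V) : ℕ :=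
  (∑ m' ∈ Finset.range m, {s | W.X m' s = v}.ncard) + nvisits (W.X m) t v

/-- the number of visits to `a` before transfinite time `m·ω` -/
noncomputable def nReturns {V : Type*} {d : V → ℕ} {succ : V → ℕ → V} {a : V}
    (W : TransRW d succ a) (m : ℕ) : ℕ :=
  ∑ m' ∈ Finset.range m, {s | W.X m' s = a}.ncard

/-- `I_n = max\{m ≥ 0 : n_{mω}(a) < n\}`, the number of escapes to infinity before the
`n`-th return to `a` -/
noncomputable def escapes {V : Type*} {d : V → ℕ} {succ : V → ℕ → V} {a : V}
    (W : TransRW d succ a) (n : ℕ) : ℕ :=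
  sSup {m : ℕ | (m : ℕ∞) ≤ W.M ∧ nReturns W m < n}

/-!
Take a finite set `B ∋ a` and a function `h` with `h a = 1`, `h = 0` off `B` and `h ≤ Ph` away
from `a`, e.g. the probability of hitting `a` within `k` steps without leaving `B`. Along a rotor
walk, `h (x (t+1)) - (Ph) (x t)` is the increment of a potential `Φ (r t)` of the rotors in `B`,
bounded by a constant `C`: the successors of a vertex are served in cyclic order, and the
increments over a full turn sum to zero. Hence `h (x t) - Φ (r t) + (1 - (Ph) a) · #{visits to a
before t}` is nondecreasing. Each transient walk starts at `a`, where `h = 1`, and eventually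
leaves `B` for good, so every escape to infinity is paid for by visits to `a` up to the change of
`Φ`, which gives `I_n ≤ (1 - (Ph) a) · n + 2C`. As `k → ∞`, `(Ph) a` increases to
`P_a(T_a^+ < ∞)`.
-/

open Filter Topology Finset

section Mean

variable {V : Type*} (d : V → ℕ) (succ : V → ℕ → V)

noncomputable def meanSucc (f : V → ℝ) (v : V) : ℝ :=
  (∑ i ∈ range (d v), f (succ v i)) / d v

variable {d succ}

theorem meanSucc_congr {f g : V → ℝ} {v : V} (hfg : ∀ i < d v, f (succ v i) = g (succ v i)) :
    meanSucc d succ f v = meanSucc d succ g v := by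
  unfold meanSucc
  rw [sum_congr rfl fun i hi => hfg i (mem_range.1 hi)]

theorem meanSucc_mono {f g : V → ℝ} (hfg : ∀ w, f w ≤ g w) (v : V) :
    meanSucc d succ f v ≤ meanSucc d succ g v := by
  unfold meanSucc
  gcongr with i
  exact hfg _

theorem meanSucc_nonneg {f : V → ℝ} (hf : ∀ w, 0 ≤ f w) (v : V) : 0 ≤ meanSucc d succ f v := by
  simpa [meanSucc] using meanSucc_mono (d := d) (succ := succ) hf v

theorem meanSucc_le_one {f : V → ℝ} (hf : ∀ w, f w ≤ 1) (v : V) : meanSucc d succ f v ≤ 1 :=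
  div_le_one_of_le₀ (by simpa using sum_le_sum fun i (_ : i ∈ range (d v)) => hf (succ v i))
    (Nat.cast_nonneg _)

theorem sum_sub_meanSucc {v : V} (hv : d v ≠ 0) (f : V → ℝ) :
    ∑ j ∈ range (d v), (f (succ v j) - meanSucc d succ f v) = 0 := by
  rw [sum_sub_distrib, sum_const, card_range, nsmul_eq_mul, meanSucc,
    mul_div_cancel₀ _ (Nat.cast_ne_zero.2 hv), sub_self]

theorem Realizes.tsum_mul_eq {p : V → V → ℝ} (hreal : Realizes d succ p) (v : V) (f : V → ℝ) :
    ∑' w, p v w * f w = meanSucc d succ f v := by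
  have hsupp : ∀ w ∉ (range (d v)).image (succ v), p v w * f w = 0 := by
    intro w hw
    have : (range (d v)).filter (fun i => succ v i = w) = ∅ :=
      filter_eq_empty_iff.2 fun i hi hiw => hw (mem_image.2 ⟨i, hi, hiw⟩)
    simp [hreal.2, this]
  rw [tsum_eq_sum hsupp, meanSucc, sum_comp, sum_div]
  refine sum_congr rfl fun w _ => ?_
  rw [hreal.2, nsmul_eq_mul]
  ring

end Mean

section TruncatedHitting

variable {V : Type*} (d : V → ℕ) (succ : V → ℕ → V)

/-- The probability of hitting `a` within `t` steps without first leaving `B`. -/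
noncomputable def truncHit (a : V) (B : Set V) : ℕ → V → ℝ
  | 0, v => if v = a then 1 else 0
  | t + 1, v => if v = a then 1 else if v ∈ B then meanSucc d succ (truncHit a B t) v else 0

noncomputable def reach (a : V) : ℕ → Finset V
  | 0 => {a}
  | s + 1 => reach a s ∪ (reach a s).biUnion fun v => (range (d v)).image (succ v)

variable {d succ} {a : V} {B : Set V}

@[simp]
theorem truncHit_self (t : ℕ) : truncHit d succ a B t a = 1 := by
  cases t <;> simp [truncHit]

theorem truncHit_nonneg : ∀ t v, 0 ≤ truncHit d succ a B t v
  | 0, v => by simp only [truncHit]; split_ifs <;> norm_num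
  | t + 1, v => by
    simp only [truncHit]
    split_ifs
    exacts [zero_le_one, meanSucc_nonneg (truncHit_nonneg t) v, le_rfl]

theorem truncHit_le_one : ∀ t v, truncHit d succ a B t v ≤ 1
  | 0, v => by simp only [truncHit]; split_ifs <;> norm_num
  | t + 1, v => by
    simp only [truncHit]
    split_ifs
    exacts [le_rfl, meanSucc_le_one (truncHit_le_one t) v, zero_le_one]

theorem truncHit_le_succ : ∀ t v, truncHit d succ a B t v ≤ truncHit d succ a B (t + 1) v
  | 0, v => by
    simp only [truncHit]
    split_ifs
    exacts [le_rfl, meanSucc_nonneg (fun w => by split_ifs <;> norm_num) v, le_rfl]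
  | t + 1, v => by
    simp only [truncHit]
    split_ifs
    exacts [le_rfl, meanSucc_mono (truncHit_le_succ t) v, le_rfl]

theorem truncHit_succ_of_mem {t : ℕ} {v : V} (hva : v ≠ a) (hvB : v ∈ B) :
    truncHit d succ a B (t + 1) v = meanSucc d succ (truncHit d succ a B t) v := by
  simp [truncHit, hva, hvB]

theorem truncHit_of_notMem {t : ℕ} {v : V} (hva : v ≠ a) (hvB : v ∉ B) :
    truncHit d succ a B t v = 0 := by
  cases t <;> simp [truncHit, hva, hvB]

theorem monotone_truncHit (v : V) : Monotone fun t => truncHit d succ a B t v :=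
  monotone_nat_of_le_succ fun t => truncHit_le_succ t v

theorem hitAux_eq_truncHit_univ {p : V → V → ℝ} (hreal : Realizes d succ p) (t : ℕ) :
    hitAux p a a t = truncHit d succ a Set.univ t := by
  induction t with
  | zero => rfl
  | succ t ih =>
    funext v
    simp only [hitAux, truncHit, hreal.tsum_mul_eq, ih, Set.mem_univ, if_true]
    split_ifs <;> rfl

theorem self_mem_reach (s : ℕ) : a ∈ reach d succ a s := by
  induction s with
  | zero => exact mem_singleton_self a
  | succ s ih => exact mem_union_left _ ih

theorem reach_mono {s s' : ℕ} (h : s ≤ s') : reach d succ a s ⊆ reach d succ a s' := by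
  induction h with
  | refl => exact subset_rfl
  | step _ ih => exact ih.trans subset_union_left

theorem succ_mem_reach {s : ℕ} {v : V} (hv : v ∈ reach d succ a s) {i : ℕ} (hi : i < d v) :
    succ v i ∈ reach d succ a (s + 1) :=
  mem_union_right _ (mem_biUnion.2 ⟨v, hv, mem_image_of_mem _ (mem_range.2 hi)⟩)

/-- Within `t` steps the chain started in `reach s` cannot leave `reach (s + t)`. -/
theorem truncHit_reach_eq (t : ℕ) :
    ∀ s, ∀ v ∈ reach d succ a s,
      truncHit d succ a (reach d succ a (s + t)) t v = truncHit d succ a Set.univ t v := by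
  induction t with
  | zero => intro s v _; rfl
  | succ t ih =>
    intro s v hv
    have hv' : v ∈ reach d succ a (s + (t + 1)) := reach_mono (Nat.le_add_right _ _) hv
    simp only [truncHit, mem_coe, hv', Set.mem_univ, if_true]
    congr 1
    refine meanSucc_congr fun i hi => ?_
    rw [← ih (s + 1) _ (succ_mem_reach hv hi), Nat.add_right_comm, Nat.add_assoc]

end TruncatedHitting

/-- A subsolution of the Dirichlet problem on `B \ {a}` (boundary values `1` at `a`, `0` off `B`)
whose solution is the probability of hitting `a` before leaving `B`. -/
structure IsHittingSubsolution {V : Type*} (d : V → ℕ) (succ : V → ℕ → V) (a : V)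
    (B : Finset V) (h : V → ℝ) : Prop where
  apply_self : h a = 1
  nonneg : ∀ v, 0 ≤ h v
  le_one : ∀ v, h v ≤ 1
  eq_zero : ∀ v ∉ B, h v = 0
  le_meanSucc : ∀ v, v ≠ a → h v ≤ meanSucc d succ h v

namespace IsHittingSubsolution

variable {V : Type*} {d : V → ℕ} {succ : V → ℕ → V} {a : V} {B : Finset V} {h : V → ℝ}

theorem mem (hh : IsHittingSubsolution d succ a B h) : a ∈ B := by
  by_contra ha
  simpa [hh.eq_zero a ha] using hh.apply_self

theorem truncHit (haB : a ∈ B) (t : ℕ) :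
    IsHittingSubsolution d succ a B (truncHit d succ a B t) where
  apply_self := truncHit_self t
  nonneg := truncHit_nonneg t
  le_one := truncHit_le_one t
  eq_zero v hv := truncHit_of_notMem (fun h => hv (h ▸ haB)) hv
  le_meanSucc v hva := by
    by_cases hvB : v ∈ B
    · exact (truncHit_le_succ t v).trans_eq (truncHit_succ_of_mem hva hvB)
    · rw [truncHit_of_notMem hva hvB]
      exact meanSucc_nonneg (truncHit_nonneg t) v

end IsHittingSubsolution

section RotorPotential

variable {V : Type*} (d : V → ℕ) (succ : V → ℕ → V) (h : V → ℝ)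

/-- Since the increments `h (succ v j) - meanSucc h v` over a full turn of the rotor at `v` sum
to zero, turning that rotor from `k` to `(k + 1) % d v` adds exactly the increment of the new
target. -/
noncomputable def turnPotential (v : V) (k : ℕ) : ℝ :=
  ∑ j ∈ range (k + 1), (h (succ v j) - meanSucc d succ h v)

noncomputable def rotorPotential (B : Finset V) (ρ : V → ℕ) : ℝ :=
  ∑ v ∈ B, turnPotential d succ h v (ρ v)

variable {d succ h}

theorem turnPotential_turn {v : V} {k : ℕ} (hk : k < d v) :
    turnPotential d succ h v ((k + 1) % d v) - turnPotential d succ h v k =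
      h (succ v ((k + 1) % d v)) - meanSucc d succ h v := by
  rcases (Nat.succ_le_of_lt hk).lt_or_eq with hlt | heq
  · rw [Nat.mod_eq_of_lt hlt, turnPotential, turnPotential, sum_range_succ _ (k + 1)]
    ring
  · have hfull := sum_sub_meanSucc (succ := succ) (by omega : d v ≠ 0) h
    rw [← heq] at hfull ⊢
    simp [turnPotential, hfull]

theorem abs_turnPotential_le {v : V} {k : ℕ} (hk : k < d v) :
    |turnPotential d succ h v k| ≤ ∑ j ∈ range (d v), |h (succ v j) - meanSucc d succ h v| :=
  (abs_sum_le_sum_abs _ _).trans <|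
    sum_le_sum_of_subset_of_nonneg (range_subset_range.2 hk) fun _ _ _ => abs_nonneg _

theorem abs_rotorPotential_le (B : Finset V) {ρ : V → ℕ} (hρ : ∀ v, ρ v < d v) :
    |rotorPotential d succ h B ρ| ≤
      ∑ v ∈ B, ∑ j ∈ range (d v), |h (succ v j) - meanSucc d succ h v| :=
  (abs_sum_le_sum_abs _ _).trans <| sum_le_sum fun v _ => abs_turnPotential_le (hρ v)

end RotorPotential

theorem nvisits_succ {V : Type*} (x : ℕ → V) (t : ℕ) (v : V) :
    nvisits x (t + 1) v = nvisits x t v + if x t = v then 1 else 0 := by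
  unfold nvisits
  rw [range_add_one, filter_insert]
  split_ifs
  · rw [card_insert_of_notMem (by simp)]
  · rw [add_zero]

theorem nvisits_eq_ncard {V : Type*} {x : ℕ → V} {N : ℕ} {v : V}
    (hN : ∀ s, N ≤ s → x s ≠ v) : nvisits x N v = {s | x s = v}.ncard := by
  have : {s | x s = v} = ↑((range N).filter fun s => x s = v) := by
    ext s
    rw [coe_filter]
    simp only [mem_range]
    exact ⟨fun hs => ⟨not_le.1 fun hNs => hN s hNs hs, hs⟩, And.right⟩
  rw [this, Set.ncard_coe_finset, nvisits]

namespace IsRotorWalk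

variable {V : Type*} {d : V → ℕ} {succ : V → ℕ → V} {x : ℕ → V} {r : ℕ → V → ℕ}

theorem rotor_lt (hw : IsRotorWalk d succ x r) (t : ℕ) (v : V) : r t v < d v := by
  induction t generalizing v with
  | zero => exact hw.1 v
  | succ t ih =>
    by_cases hv : v = x t
    · subst hv
      rw [hw.2.1 t]
      exact Nat.mod_lt _ ((Nat.zero_le _).trans_lt (ih _))
    · rw [hw.2.2.1 t v hv]
      exact ih v

theorem rotorPotential_succ_sub (hw : IsRotorWalk d succ x r) (h : V → ℝ) (B : Finset V)
    (t : ℕ) :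
    rotorPotential d succ h B (r (t + 1)) - rotorPotential d succ h B (r t) =
      if x t ∈ B then h (x (t + 1)) - meanSucc d succ h (x t) else 0 := by
  have hterm : ∀ v ∈ B,
      turnPotential d succ h v (r (t + 1) v) - turnPotential d succ h v (r t v) =
        if x t = v then h (x (t + 1)) - meanSucc d succ h (x t) else 0 := by
    intro v _
    split_ifs with hv
    · subst hv
      rw [hw.2.2.2 t, hw.2.1 t]
      exact turnPotential_turn (hw.rotor_lt t _)
    · rw [hw.2.2.1 t v (Ne.symm hv), sub_self]
  rw [rotorPotential, rotorPotential, ← sum_sub_distrib, sum_congr rfl hterm, sum_ite_eq]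

theorem monotone_sub_rotorPotential_add_nvisits (hw : IsRotorWalk d succ x r) {a : V}
    {B : Finset V} {h : V → ℝ} (hh : IsHittingSubsolution d succ a B h) :
    Monotone fun t => h (x t) - rotorPotential d succ h B (r t) +
      (1 - meanSucc d succ h a) * nvisits x t a := by
  refine monotone_nat_of_le_succ fun t => ?_
  have hΦ := hw.rotorPotential_succ_sub h B t
  simp only [nvisits_succ, Nat.cast_add, Nat.cast_ite, Nat.cast_one, Nat.cast_zero]
  by_cases hB : x t ∈ B
  · rw [if_pos hB] at hΦ
    by_cases ha : x t = a
    · rw [if_pos ha, ha, hh.apply_self]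
      rw [ha] at hΦ
      linarith
    · rw [if_neg ha]
      linarith [hh.le_meanSucc _ ha]
  · rw [if_neg hB] at hΦ
    rw [if_neg fun ha : x t = a => hB (ha ▸ hh.mem), hh.eq_zero _ hB]
    linarith [hh.nonneg (x (t + 1))]

end IsRotorWalk

theorem limsup_div_le_of_le_mul_add {f : ℕ → ℝ} {e C : ℝ} (hf0 : ∀ n, 0 ≤ f n)
    (hf : ∀ n, f n ≤ e * n + C) : limsup (fun n => f n / n) atTop ≤ e := by
  have hlim : Tendsto (fun n : ℕ => e + C / n) atTop (𝓝 e) := by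
    simpa using (tendsto_const_div_atTop_nhds_zero_nat C).const_add e
  have hle : ∀ᶠ n : ℕ in atTop, f n / n ≤ e + C / n := by
    filter_upwards [eventually_ge_atTop 1] with n hn
    have hn' : (0 : ℝ) < n := by exact_mod_cast hn
    rw [div_le_iff₀ hn', add_mul, div_mul_cancel₀ _ hn'.ne']
    linarith [hf n]
  calc limsup (fun n => f n / n) atTop ≤ limsup (fun n : ℕ => e + C / n) atTop :=
        limsup_le_limsup hle (isCoboundedUnder_le_of_le _ fun n => div_nonneg (hf0 n) n.cast_nonneg)
          hlim.isBoundedUnder_le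
    _ = e := hlim.limsup_eq

namespace TransRW

variable {V : Type*} {d : V → ℕ} {succ : V → ℕ → V} {a : V} (W : TransRW d succ a)

theorem eventually_stable {m : ℕ} (hm : (m : ℕ∞) < W.M) (B : Finset V) :
    ∀ᶠ t in atTop, ∀ v ∈ B, (∀ s, t ≤ s → W.X m s ≠ v) ∧ W.R m t v = W.R (m + 1) 0 v := by
  refine (eventually_all_finset B).2 fun v _ => ?_
  refine (eventually_forall_ge_atTop.2 ?_).and (eventually_atTop.2 (W.limit m hm v))
  rw [← Nat.cofinite_eq_atTop]
  exact (W.transient m hm v).eventually_cofinite_notMem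

theorem one_add_rotorPotential_sub_le (hM : W.M = ⊤) {B : Finset V} {h : V → ℝ}
    (hh : IsHittingSubsolution d succ a B h) (m : ℕ) :
    1 + (rotorPotential d succ h B (W.R (m + 1) 0) - rotorPotential d succ h B (W.R m 0)) ≤
      (1 - meanSucc d succ h a) * {s | W.X m s = a}.ncard := by
  obtain ⟨hw, hx0⟩ := W.walk m (by simp [hM])
  obtain ⟨N, hN⟩ := (W.eventually_stable (by simp [hM]) B).exists
  have hleft : h (W.X m N) = 0 := hh.eq_zero _ fun hB => (hN _ hB).1 N le_rfl rfl
  have hΦ : rotorPotential d succ h B (W.R m N) = rotorPotential d succ h B (W.R (m + 1) 0) :=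
    sum_congr rfl fun v hv => by rw [(hN v hv).2]
  have hstart : nvisits (W.X m) 0 a = 0 := by simp [nvisits]
  have hmono := hw.monotone_sub_rotorPotential_add_nvisits hh (Nat.zero_le N)
  simp only [hx0, hh.apply_self, hleft, hΦ, hstart, nvisits_eq_ncard (hN a hh.mem).1,
    Nat.cast_zero, mul_zero] at hmono
  linarith

theorem exists_le_mul_nReturns_add (hM : W.M = ⊤) {B : Finset V} {h : V → ℝ}
    (hh : IsHittingSubsolution d succ a B h) :
    ∃ C, ∀ m : ℕ, (m : ℝ) ≤ (1 - meanSucc d succ h a) * nReturns W m + C := by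
  set K := ∑ v ∈ B, ∑ j ∈ range (d v), |h (succ v j) - meanSucc d succ h v|
  have hbound : ∀ m, |rotorPotential d succ h B (W.R m 0)| ≤ K := fun m =>
    abs_rotorPotential_le B ((W.walk m (by simp [hM])).1.rotor_lt 0)
  refine ⟨2 * K, fun m => ?_⟩
  have hsum := sum_le_sum fun m' (_ : m' ∈ range m) => W.one_add_rotorPotential_sub_le hM hh m'
  rw [sum_add_distrib, sum_range_sub (fun m' => rotorPotential d succ h B (W.R m' 0)),
    ← mul_sum] at hsum
  simp only [sum_const, card_range, nsmul_eq_mul, mul_one] at hsum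
  have h0 := abs_le.1 (hbound 0)
  have hm := abs_le.1 (hbound m)
  push_cast [nReturns]
  linarith

theorem escapes_le_of_forall_le {n : ℕ} {b : ℝ} (hb : 0 ≤ b)
    (H : ∀ m : ℕ, (m : ℕ∞) ≤ W.M → nReturns W m < n → (m : ℝ) ≤ b) : (escapes W n : ℝ) ≤ b :=
  calc (escapes W n : ℝ) ≤ ⌊b⌋₊ := by
        exact_mod_cast csSup_le' <| by rintro m ⟨hmM, hmn⟩; exact Nat.le_floor (H m hmM hmn)
    _ ≤ b := Nat.floor_le hb

theorem exists_escapes_le {B : Finset V} {h : V → ℝ} (hh : IsHittingSubsolution d succ a B h) :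
    ∃ C, ∀ n : ℕ, (escapes W n : ℝ) ≤ (1 - meanSucc d succ h a) * n + C := by
  have he : 0 ≤ 1 - meanSucc d succ h a := sub_nonneg.2 (meanSucc_le_one hh.le_one a)
  rcases eq_or_ne W.M ⊤ with hM | hM
  · obtain ⟨C, hC⟩ := W.exists_le_mul_nReturns_add hM hh
    have hC0 : 0 ≤ C := by simpa [nReturns] using hC 0
    refine ⟨C, fun n => W.escapes_le_of_forall_le (by positivity) fun m _ hmn => (hC m).trans ?_⟩
    gcongr
  · obtain ⟨N, hN⟩ := ENat.ne_top_iff_exists.1 hM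
    refine ⟨N, fun n => W.escapes_le_of_forall_le (by positivity) fun m hmM _ => ?_⟩
    have hmN : (m : ℝ) ≤ N := by exact_mod_cast (hN ▸ hmM : (m : ℕ∞) ≤ N)
    linarith [mul_nonneg he (Nat.cast_nonneg n : (0 : ℝ) ≤ n)]

theorem limsup_escapes_div_le {B : Finset V} {h : V → ℝ}
    (hh : IsHittingSubsolution d succ a B h) :
    limsup (fun n : ℕ => (escapes W n : ℝ) / n) atTop ≤ 1 - meanSucc d succ h a := by
  obtain ⟨C, hC⟩ := W.exists_escapes_le hh
  exact limsup_div_le_of_le_mul_add (fun n => Nat.cast_nonneg _) hC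

end TransRW

theorem transience_density_general {V : Type*}
    (d : V → ℕ) (succ : V → ℕ → V) (p : V → V → ℝ)
    (hreal : Realizes d succ p)
    (a : V) (W : TransRW d succ a) :
    Filter.limsup (fun n : ℕ => (escapes W n : ℝ) / (n : ℝ)) Filter.atTop ≤
      1 - ∑' w, p a w * hitProb p a a w := by
  have hhit : ∀ v, Tendsto (fun t => truncHit d succ a Set.univ t v) atTop
      (𝓝 (hitProb p a a v)) := fun v => by
    simp only [hitProb, hitAux_eq_truncHit_univ hreal]
    exact tendsto_atTop_ciSup (monotone_truncHit v)
      ⟨1, by rintro _ ⟨t, rfl⟩; exact truncHit_le_one t v⟩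
  have hmean : Tendsto (fun t => 1 - meanSucc d succ (truncHit d succ a Set.univ t) a) atTop
      (𝓝 (1 - ∑' w, p a w * hitProb p a a w)) := by
    rw [hreal.tsum_mul_eq]
    exact ((tendsto_finsetSum _ fun i _ => hhit (succ a i)).div_const _).const_sub 1
  refine ge_of_tendsto' hmean fun t => ?_
  have hball : meanSucc d succ (truncHit d succ a (reach d succ a (1 + t)) t) a =
      meanSucc d succ (truncHit d succ a Set.univ t) a :=
    meanSucc_congr fun i hi => truncHit_reach_eq t 1 _ (succ_mem_reach (self_mem_reach 0) hi)
  rw [← hball]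
  exact W.limsup_escapes_div_le (IsHittingSubsolution.truncHit (self_mem_reach _) t)

/-- **Transience density** (Theorem `density`, Oded Schramm):
`limsup_n I_n / n ≤ P_a(T_a^+ = ∞)`. -/
theorem transience_density {V : Type*} [Countable V]
    (d : V → ℕ) (succ : V → ℕ → V) (p : V → V → ℝ)
    (hreal : Realizes d succ p) (hirr : IrreducibleKernel p)
    (a : V) (W : TransRW d succ a) :
    Filter.limsup (fun n : ℕ => (escapes W n : ℝ) / (n : ℝ)) Filter.atTop ≤
      1 - ∑' w, p a w * hitProb p a a w :=
  transience_density_general d succ p hreal a W
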